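/- Let G be a 4-connected finite simple graph, let C be a longest cycle in G which is a D₃-cycle, and let x₁x₂ be an edge of G∖C. With R = N_C(x₁) ∪ N_C(x₂), M = N_C(x₁) ∩ N_C(x₂), A = R∖M, and Y = R ∪ R⁺ ∪ M⁺², the sets R, R⁺, and M⁺² are pairwise disjoint, and |Y| = 2|R| + |M| = 3|M| + 2|A|. -/

import Mathlib

namespace SimpleGraph

variable {V : Type*}

/-- `S` is a cut-set of `G`: deleting `S` disconnects the graph. -/
def IsCutSet [Fintype V] (G : SimpleGraph V) (S : Finset V) : Prop :=
  ¬ (G.induce ((↑S : Set V)ᶜ)).Connected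

/-- The vertex connectivity of `G`: the largest `k` such that `G` is `k`-connected,
i.e. `G` has more than `k` vertices and removing fewer than `k` vertices
always leaves a connected graph. -/
noncomputable def vertexConnectivity [Fintype V] (G : SimpleGraph V) : ℕ :=
  sSup {k | k < Fintype.card V ∧
    ∀ S : Finset V, S.card < k → (G.induce ((↑S : Set V)ᶜ)).Connected}

/-- `S` is a minimum cut-set of `G`: a cut-set whose cardinality equals
the connectivity of `G`. -/
def IsMinCutSet [Fintype V] (G : SimpleGraph V) (S : Finset V) : Prop :=
  G.IsCutSet S ∧ S.card = G.vertexConnectivity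

/-- The circumference of `G`: the length of a longest cycle (`0` if there is none). -/
noncomputable def circumference (G : SimpleGraph V) : ℕ :=
  sSup {n | ∃ (v : V) (C : G.Walk v v), C.IsCycle ∧ C.length = n}

/-- `C` is a longest cycle in `G`. -/
def IsLongestCycle {G : SimpleGraph V} {v : V} (C : G.Walk v v) : Prop :=
  C.IsCycle ∧ ∀ (w : V) (D : G.Walk w w), D.IsCycle → D.length ≤ C.length

/-- `C` is a dominating cycle: every edge of `G` has an endpoint on `C`. -/
def IsDominatingCycle {G : SimpleGraph V} {v : V} (C : G.Walk v v) : Prop :=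
  C.IsCycle ∧ ∀ a b : V, G.Adj a b → a ∈ C.support ∨ b ∈ C.support

/-- `C` is a `D₃`-cycle: every path of length at least 2 in `G` has a vertex
in common with `C`. -/
def IsD3Cycle {G : SimpleGraph V} {v : V} (C : G.Walk v v) : Prop :=
  C.IsCycle ∧ ∀ (a b : V) (P : G.Walk a b), P.IsPath → 2 ≤ P.length →
    ∃ z, z ∈ P.support ∧ z ∈ C.support

/-- The successor of a vertex `x` on the (oriented) cycle `C`
(and `x` itself if `x` does not lie on `C`). -/
noncomputable def cycleSucc [DecidableEq V] {G : SimpleGraph V} {v : V}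
    (C : G.Walk v v) (x : V) : V :=
  if h : x ∈ C.support.tail then C.support.tail.next x h else x

/-- The neighborhood of `x` on the cycle `C`, as a finset: `N(x) ∩ V(C)`. -/
def cycleNbhd [Fintype V] [DecidableEq V] {G : SimpleGraph V} [DecidableRel G.Adj]
    {v : V} (C : G.Walk v v) (x : V) : Finset V :=
  G.neighborFinset x ∩ C.support.toFinset

end SimpleGraph

/-!
Each excluded configuration yields a cycle longer than `C`. If `u` and `u⁺` both have a
neighbour in `{x₁, x₂}`, replace the edge `u u⁺` by `u xᵢ u⁺` or `u xᵢ xⱼ u⁺`; if `u ∈ M` and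
`u⁺²` is adjacent to `xⱼ`, replace `u u⁺ u⁺²` by `u xᵢ xⱼ u⁺²` with `i ≠ j`. The successor map
on `C` is the permutation `List.formPerm` of its vertex list, hence injective, and the
cardinality identities follow from the disjointness.
-/

namespace SimpleGraph

variable {V : Type*} {G : SimpleGraph V}

namespace Walk

variable {u v w : V}

theorem IsPath.append_of_disjoint {p : G.Walk u v} {q : G.Walk v w} (hp : p.IsPath)
    (hq : q.IsPath) (hpq : ∀ z ∈ p.support, z ∉ q.support.tail) : (p.append q).IsPath := by
  rw [isPath_def, support_append, List.nodup_append]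
  exact ⟨hp.support_nodup, hq.support_nodup.sublist (List.tail_sublist _),
    fun a ha b hb hab => hpq a ha (hab ▸ hb)⟩

theorem IsPath.cons_isCycle_of_two_le_length {p : G.Walk v u} (hp : p.IsPath) (h : G.Adj u v)
    (hlen : 2 ≤ p.length) : (cons h p).IsCycle := by
  refine (cons_isCycle_iff p h).2 ⟨hp, fun he => ?_⟩
  cases p with
  | nil => simp at hlen
  | cons hvw q =>
    have hq : q.IsPath := hp.of_cons
    have hvq : v ∉ q.support := hp.support_nodup.notMem
    rw [edges_cons, List.mem_cons] at he
    rcases he with he | he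
    · rcases Sym2.eq_iff.1 he with ⟨rfl, -⟩ | ⟨rfl, -⟩
      · exact hvq q.end_mem_support
      · simp [length_eq_zero_iff.2 (isPath_iff_nil.1 hq)] at hlen
    · exact hvq (q.snd_mem_support_of_mem_edges he)

variable [DecidableEq V]

theorem formPerm_support_tail_getVert {p : G.Walk v v} (hp : p.support.tail.Nodup) {i : ℕ}
    (hi : i < p.length) : p.support.tail.formPerm (p.getVert i) = p.getVert (i + 1) := by
  have hlen : p.support.tail.length = p.length := by simp
  have hstep (j : ℕ) (hj : j < p.length) :
      p.support.tail.formPerm (p.getVert (j + 1)) = p.getVert ((j + 1) % p.length + 1) := by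
    have := List.formPerm_apply_getElem _ hp j (by omega)
    simpa only [List.getElem_tail, support_getElem_eq_getVert, hlen] using this
  rcases i with _ | i
  · have := hstep (p.length - 1) (by omega)
    rw [Nat.sub_add_cancel hi, Nat.mod_self, getVert_length] at this
    rwa [getVert_zero]
  · rw [hstep i (by omega), Nat.mod_eq_of_lt hi]

end Walk

open Walk

section cycleSucc

variable [DecidableEq V] {v u : V} {C : G.Walk v v}

theorem cycleSucc_eq_formPerm (hC : C.support.tail.Nodup) :
    cycleSucc C = C.support.tail.formPerm := by
  funext x
  unfold cycleSucc
  split_ifs with hx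
  · exact (List.formPerm_apply_mem_eq_next hC x hx).symm
  · exact (List.formPerm_apply_of_notMem hx).symm

theorem cycleSucc_injective (hC : C.support.tail.Nodup) : Function.Injective (cycleSucc C) := by
  rw [cycleSucc_eq_formPerm hC]
  exact Equiv.injective _

theorem iterate_cycleSucc_eq_getVert_rotate (hC : C.support.tail.Nodup) (hu : u ∈ C.support)
    {k : ℕ} (hk : k ≤ C.length) : (cycleSucc C)^[k] u = (C.rotate u hu).getVert k := by
  have hrot := C.support_rotate u hu
  have hE : (C.rotate u hu).support.tail.Nodup := hrot.nodup_iff.2 hC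
  rw [cycleSucc_eq_formPerm hC, ← List.formPerm_eq_of_isRotated hE hrot]
  induction k with
  | zero => simp
  | succ k ih =>
    rw [Function.iterate_succ_apply', ih (by omega),
      formPerm_support_tail_getVert hE (by simp only [length_rotate]; omega)]

end cycleSucc

section detour

variable [DecidableEq V] {v u x y : V} {C : G.Walk v v}

theorem IsLongestCycle.not_adj_iterate_cycleSucc (hC : IsLongestCycle C) (hu : u ∈ C.support)
    {k : ℕ} (hk : 0 < k) (hkC : k < C.length) (Q : G.Walk x y) (hQ : Q.IsPath)
    (hQC : ∀ z ∈ Q.support, z ∉ C.support) (hkQ : k < Q.length + 2) (hux : G.Adj u x) :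
    ¬ G.Adj y ((cycleSucc C)^[k] u) := by
  intro hy
  rw [iterate_cycleSucc_eq_getVert_rotate hC.1.support_nodup hu hkC.le] at hy
  set P := (C.rotate u hu).drop k
  have hP : P.IsPath := (hC.1.rotate hu).isPath_drop hk
  have hPC : ∀ z ∈ P.support, z ∈ C.support := fun z hz => by
    rw [drop_support_eq_support_drop_min] at hz
    exact (mem_support_rotate_iff C u hu).1 (List.mem_of_mem_drop hz)
  have hpath : (Q.append (cons hy P)).IsPath :=
    hQ.append_of_disjoint (hP.cons fun h => hQC _ Q.end_mem_support (hPC _ h))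
      fun z hz hzP => hQC z hz (hPC z hzP)
  have hcyc := hpath.cons_isCycle_of_two_le_length hux (by simp only [length_append, length_cons, drop_length, length_rotate, P]; omega)
  have hlen := hC.2 _ _ hcyc
  simp only [length_cons, length_append, drop_length, length_rotate, P] at hlen
  omega

theorem IsLongestCycle.not_adj_cycleSucc_of_adj (hC : IsLongestCycle C) (hu : u ∈ C.support)
    (hx : x ∉ C.support) (hxu : G.Adj x u) : ¬ G.Adj x (cycleSucc C u) :=
  hC.not_adj_iterate_cycleSucc hu (k := 1) one_pos ((by norm_num : 1 < 3).trans_le hC.1.three_le_length)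
    .nil
    (by simp) (by simpa using hx) (by simp) hxu.symm

theorem IsLongestCycle.not_adj_iterate_cycleSucc_of_adj (hC : IsLongestCycle C)
    (hu : u ∈ C.support) (hx : x ∉ C.support) (hy : y ∉ C.support) (hxy : G.Adj x y)
    {k : ℕ} (hk : 0 < k) (hk3 : k < 3) (hxu : G.Adj x u) : ¬ G.Adj y ((cycleSucc C)^[k] u) :=
  hC.not_adj_iterate_cycleSucc hu hk (hk3.trans_le hC.1.three_le_length) hxy.toWalk
    (by simpa using hxy.ne) (by simp [hx, hy]) (by simpa using hk3) hxu.symm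

end detour

section cycleNbhd

variable [Fintype V] [DecidableEq V] [DecidableRel G.Adj] {v x₁ x₂ : V} {C : G.Walk v v}

@[simp]
theorem mem_cycleNbhd {x z : V} : z ∈ cycleNbhd C x ↔ G.Adj x z ∧ z ∈ C.support := by
  simp [cycleNbhd]

theorem IsLongestCycle.disjoint_cycleNbhd_image_cycleSucc (hC : IsLongestCycle C)
    (hadj : G.Adj x₁ x₂) (hx₁ : x₁ ∉ C.support) (hx₂ : x₂ ∉ C.support) :
    Disjoint (cycleNbhd C x₁ ∪ cycleNbhd C x₂)
      ((cycleNbhd C x₁ ∪ cycleNbhd C x₂).image (cycleSucc C)) := by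
  rw [Finset.disjoint_left]
  intro _ hz hz'
  obtain ⟨u, hu, rfl⟩ := Finset.mem_image.1 hz'
  simp only [Finset.mem_union, mem_cycleNbhd] at hz hu
  rcases hu with ⟨h₁, hu⟩ | ⟨h₂, hu⟩ <;> rcases hz with ⟨h, -⟩ | ⟨h, -⟩
  · exact hC.not_adj_cycleSucc_of_adj hu hx₁ h₁ h
  · exact hC.not_adj_iterate_cycleSucc_of_adj hu hx₁ hx₂ hadj one_pos (by norm_num) h₁ h
  · exact hC.not_adj_iterate_cycleSucc_of_adj hu hx₂ hx₁ hadj.symm one_pos (by norm_num) h₂ h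
  · exact hC.not_adj_cycleSucc_of_adj hu hx₂ h₂ h

theorem IsLongestCycle.disjoint_cycleNbhd_image_cycleSucc_cycleSucc (hC : IsLongestCycle C)
    (hadj : G.Adj x₁ x₂) (hx₁ : x₁ ∉ C.support) (hx₂ : x₂ ∉ C.support) :
    Disjoint (cycleNbhd C x₁ ∪ cycleNbhd C x₂)
      ((cycleNbhd C x₁ ∩ cycleNbhd C x₂).image (cycleSucc C ∘ cycleSucc C)) := by
  rw [Finset.disjoint_left]
  intro _ hz hz'
  obtain ⟨u, hu, rfl⟩ := Finset.mem_image.1 hz'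
  simp only [Finset.mem_union, Finset.mem_inter, mem_cycleNbhd] at hz hu
  obtain ⟨⟨h₁, hu⟩, h₂, -⟩ := hu
  rcases hz with ⟨h, -⟩ | ⟨h, -⟩
  · exact hC.not_adj_iterate_cycleSucc_of_adj (k := 2) hu hx₂ hx₁ hadj.symm two_pos
      (by norm_num) h₂ h
  · exact hC.not_adj_iterate_cycleSucc_of_adj (k := 2) hu hx₁ hx₂ hadj two_pos
      (by norm_num) h₁ h

end cycleNbhd

end SimpleGraph

open SimpleGraph in
theorem statement_7_general {V : Type*} [Fintype V] [DecidableEq V]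
    (G : SimpleGraph V) [DecidableRel G.Adj]
    {v : V} (C : G.Walk v v) (hC : IsLongestCycle C)
    (x₁ x₂ : V) (hadj : G.Adj x₁ x₂) (hx₁ : x₁ ∉ C.support) (hx₂ : x₂ ∉ C.support)
    (R M A Y : Finset V)
    (hR : R = cycleNbhd C x₁ ∪ cycleNbhd C x₂)
    (hM : M = cycleNbhd C x₁ ∩ cycleNbhd C x₂)
    (hA : A = R \ M)
    (hY : Y = R ∪ R.image (cycleSucc C) ∪ M.image (cycleSucc C ∘ cycleSucc C)) :
    (Disjoint R (R.image (cycleSucc C)) ∧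
      Disjoint R (M.image (cycleSucc C ∘ cycleSucc C)) ∧
      Disjoint (R.image (cycleSucc C)) (M.image (cycleSucc C ∘ cycleSucc C))) ∧
    Y.card = 2 * R.card + M.card ∧ Y.card = 3 * M.card + 2 * A.card := by
  have hinj := cycleSucc_injective hC.1.support_nodup
  have hMR : M ⊆ R := hM ▸ hR ▸ Finset.inter_subset_union
  have hRR : Disjoint R (R.image (cycleSucc C)) :=
    hR ▸ hC.disjoint_cycleNbhd_image_cycleSucc hadj hx₁ hx₂
  have hRM : Disjoint R (M.image (cycleSucc C ∘ cycleSucc C)) :=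
    hR ▸ hM ▸ hC.disjoint_cycleNbhd_image_cycleSucc_cycleSucc hadj hx₁ hx₂
  -- `(·)⁺` is injective, so this is `Disjoint R M⁺`, and `M⁺ ⊆ R⁺`
  have hRM' : Disjoint (R.image (cycleSucc C)) (M.image (cycleSucc C ∘ cycleSucc C)) := by
    rw [← Finset.image_image, Finset.disjoint_image hinj]
    exact hRR.mono_right (Finset.image_subset_image hMR)
  have hYcard : Y.card = R.card + R.card + M.card := by
    rw [hY, Finset.card_union_of_disjoint (Finset.disjoint_union_left.2 ⟨hRM, hRM'⟩),
      Finset.card_union_of_disjoint hRR, Finset.card_image_of_injective _ hinj,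
      Finset.card_image_of_injective _ (hinj.comp hinj)]
  have hAcard : A.card + M.card = R.card := hA ▸ Finset.card_sdiff_add_card_eq_card hMR
  exact ⟨⟨hRR, hRM, hRM'⟩, by omega, by omega⟩

open SimpleGraph in
/-- The sets `R`, `R⁺`, `M⁺²` are pairwise disjoint and
`|Y| = 2|R| + |M| = 3|M| + 2|A|`. -/
theorem statement_7 {V : Type*} [Fintype V] [DecidableEq V]
    (G : SimpleGraph V) [DecidableRel G.Adj]
    (h4 : 4 ≤ G.vertexConnectivity)
    {v : V} (C : G.Walk v v) (hC : IsLongestCycle C) (hD3 : IsD3Cycle C)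
    (x₁ x₂ : V) (hadj : G.Adj x₁ x₂) (hx₁ : x₁ ∉ C.support) (hx₂ : x₂ ∉ C.support)
    (R M A Y : Finset V)
    (hR : R = cycleNbhd C x₁ ∪ cycleNbhd C x₂)
    (hM : M = cycleNbhd C x₁ ∩ cycleNbhd C x₂)
    (hA : A = R \ M)
    (hY : Y = R ∪ R.image (cycleSucc C) ∪ M.image (cycleSucc C ∘ cycleSucc C)) :
    (Disjoint R (R.image (cycleSucc C)) ∧
      Disjoint R (M.image (cycleSucc C ∘ cycleSucc C)) ∧
      Disjoint (R.image (cycleSucc C)) (M.image (cycleSucc C ∘ cycleSucc C))) ∧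
    Y.card = 2 * R.card + M.card ∧ Y.card = 3 * M.card + 2 * A.card :=
  statement_7_general G C hC x₁ x₂ hadj hx₁ hx₂ R M A Y hR hM hA hY
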